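/- arXiv:2207.14734 — 4 statements merged into one kernel-verified Lean document; each statement's English description precedes it below -/
import Mathlib

section
/- Let d ≥ 1 and let U be a random unitary supported on finitely many d×d unitaries U_1, …, U_m with probabilities p_1, …, p_m (p_a ≥ 0, Σ_a p_a = 1). Assume the 2-design second-moment property on basis states: for every standard basis vector |j⟩ (j = 1, …, d), Σ_a p_a (U_a |j⟩⟨j| U_a*) ⊗ (U_a |j⟩⟨j| U_a*) = (1/(d(d+1)))·(I ⊗ I + W), where W is the swap operator on ℂ^d ⊗ ℂ^d. Define the measure-and-prepare map Ψ₀ on d×d complex matrices by Ψ₀(X) = Σ_a p_a Σ_{j=1}^d ⟨j| U_a* X U_a |j⟩ · U_a |j⟩⟨j| U_a*. Then for every d×d complex matrix X, Ψ₀(X) = (1/(d+1))·(Tr(X)·I + X). -/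
open Matrix
open scoped Kronecker

/-- The swap operator `W` on `ℂ^d ⊗ ℂ^d`, as a matrix indexed by pairs:
`W_{(i,j),(k,l)} = δ_{i,l} δ_{j,k}`. -/
def swapMatrix (d : ℕ) : Matrix (Fin d × Fin d) (Fin d × Fin d) ℂ :=
  fun p q => if p.1 = q.2 ∧ p.2 = q.1 then 1 else 0

/-- The pure state `U |j⟩⟨j| U*`. -/
noncomputable def rotatedProj (d : ℕ) (U : Matrix (Fin d) (Fin d) ℂ) (j : Fin d) :
    Matrix (Fin d) (Fin d) ℂ :=
  U * Matrix.single j j 1 * Uᴴ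

lemma rotatedProj_apply (d : ℕ) (U : Matrix (Fin d) (Fin d) ℂ) (j s r : Fin d) :
    rotatedProj d U j s r = U s j * star (U r j) := by
  simp [rotatedProj, Matrix.mul_apply, Matrix.single, Matrix.conjTranspose_apply,
    Finset.sum_ite_eq, ite_and]

theorem stmt_1 (d m : ℕ) (hd : 1 ≤ d)
    (U : Fin m → Matrix (Fin d) (Fin d) ℂ)
    (hU : ∀ a, U a ∈ Matrix.unitaryGroup (Fin d) ℂ)
    (p : Fin m → ℝ) (hp : ∀ a, 0 ≤ p a) (hpsum : ∑ a, p a = 1)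
    (hdesign : ∀ j : Fin d,
      ∑ a, (p a : ℂ) • (rotatedProj d (U a) j ⊗ₖ rotatedProj d (U a) j)
        = (1 / (d * (d + 1)) : ℂ) •
            ((1 : Matrix (Fin d) (Fin d) ℂ) ⊗ₖ (1 : Matrix (Fin d) (Fin d) ℂ)
              + swapMatrix d))
    (X : Matrix (Fin d) (Fin d) ℂ) :
    ∑ a, (p a : ℂ) • ∑ j, (((U a)ᴴ * X * U a) j j) • rotatedProj d (U a) j
      = (1 / (d + 1) : ℂ) •
          (X.trace • (1 : Matrix (Fin d) (Fin d) ℂ) + X) := by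
  have hdc : (d : ℂ) ≠ 0 := Nat.cast_ne_zero.mpr (by omega)
  ext i k
  have key : ∀ (j s r : Fin d),
      ∑ a, (p a : ℂ) * (rotatedProj d (U a) j r s * rotatedProj d (U a) j i k)
        = ((d : ℂ) + 1)⁻¹ * (d : ℂ)⁻¹ *
            ((if r = s ∧ i = k then (1:ℂ) else 0)
              + (if r = k ∧ i = s then 1 else 0)) := by
    intro j s r
    have h := congrFun (congrFun (hdesign j) (r, i)) (s, k)
    simpa [Matrix.sum_apply, Matrix.smul_apply, Matrix.add_apply,
      Matrix.kroneckerMap_apply, Matrix.one_apply, swapMatrix, smul_eq_mul] using h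
  have expand : ∀ a, (∑ j, (((U a)ᴴ * X * U a) j j) • rotatedProj d (U a) j) i k
      = ∑ j, ∑ s, ∑ r, X s r *
          (rotatedProj d (U a) j r s * rotatedProj d (U a) j i k) := by
    intro a
    simp only [Matrix.sum_apply, Matrix.smul_apply, smul_eq_mul, Matrix.mul_apply,
      rotatedProj_apply, Matrix.conjTranspose_apply, Finset.sum_mul, Finset.mul_sum]
    refine Finset.sum_congr rfl fun j _ => ?_
    rw [Finset.sum_comm]
    refine Finset.sum_congr rfl fun s _ => Finset.sum_congr rfl fun r _ => ?_
    ring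
  -- rewrite LHS
  calc ((∑ a, (p a : ℂ) • ∑ j, (((U a)ᴴ * X * U a) j j) • rotatedProj d (U a) j)) i k
      = ∑ j : Fin d, ∑ s, ∑ r, X s r *
          ∑ a, (p a : ℂ) * (rotatedProj d (U a) j r s * rotatedProj d (U a) j i k) := by
        rw [Matrix.sum_apply]
        simp only [Matrix.smul_apply, smul_eq_mul, expand, Finset.mul_sum]
        rw [Finset.sum_comm]
        refine Finset.sum_congr rfl fun j _ => ?_
        rw [Finset.sum_comm]
        refine Finset.sum_congr rfl fun s _ => ?_
        rw [Finset.sum_comm]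
        refine Finset.sum_congr rfl fun r _ => ?_
        refine Finset.sum_congr rfl fun a _ => ?_
        ring
    _ = ∑ j : Fin d, ∑ s, ∑ r, X s r * (((d : ℂ) + 1)⁻¹ * (d : ℂ)⁻¹ *
            ((if r = s ∧ i = k then (1:ℂ) else 0)
              + (if r = k ∧ i = s then 1 else 0))) := by
        refine Finset.sum_congr rfl fun j _ => Finset.sum_congr rfl fun s _ =>
          Finset.sum_congr rfl fun r _ => ?_
        rw [key]
    _ = (d : ℂ) * (((d : ℂ) + 1)⁻¹ * (d : ℂ)⁻¹ *
          ((if i = k then X.trace else 0) + X i k)) := by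
        have inner : ∀ _j : Fin d, (∑ s, ∑ r, X s r * (((d : ℂ) + 1)⁻¹ * (d : ℂ)⁻¹ *
            ((if r = s ∧ i = k then (1:ℂ) else 0)
              + (if r = k ∧ i = s then 1 else 0))))
            = ((d : ℂ) + 1)⁻¹ * (d : ℂ)⁻¹ * ((if i = k then X.trace else 0) + X i k) := by
          intro _j
          simp only [mul_add, Finset.sum_add_distrib, mul_ite, mul_one, mul_zero, ite_and]
          congr 1
          · by_cases h : i = k <;>
              simp [h, Matrix.trace, Matrix.diag, Finset.mul_sum, mul_comm,
                Finset.sum_ite_eq, Finset.sum_ite_eq']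
          · simp [Finset.sum_ite_eq, Finset.sum_ite_eq', mul_comm]
        rw [Finset.sum_congr rfl fun j _ => inner j, Finset.sum_const, Finset.card_univ,
          Fintype.card_fin, nsmul_eq_mul]
    _ = ((1 / (d + 1) : ℂ) • (X.trace • (1 : Matrix (Fin d) (Fin d) ℂ) + X)) i k := by
        simp only [Matrix.smul_apply, Matrix.add_apply, Matrix.one_apply, smul_eq_mul,
          mul_ite, mul_one, mul_zero]
        have h1 : ((d:ℂ)+1) ≠ 0 := by
          have : ((d+1 : ℕ) : ℂ) ≠ 0 := Nat.cast_ne_zero.mpr (Nat.succ_ne_zero d)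
          simpa using this
        by_cases h : i = k <;> field_simp [h] <;> ring
end

section
/- Let d ≥ 1 and let U be a random unitary supported on finitely many d×d unitaries U_1, …, U_m with probabilities p_1, …, p_m (p_a ≥ 0, Σ_a p_a = 1), satisfying the 2-design second-moment property on basis states: for every standard basis vector |j⟩ (j = 1, …, d), Σ_a p_a (U_a |j⟩⟨j| U_a*) ⊗ (U_a |j⟩⟨j| U_a*) = (1/(d(d+1)))·(I ⊗ I + W), where W is the swap operator on ℂ^d ⊗ ℂ^d. Define Ψ₀(X) = Σ_a p_a Σ_{j=1}^d ⟨j| U_a* X U_a |j⟩ · U_a |j⟩⟨j| U_a* and Ψ₁(X) = Tr(X)·I/d. Then for every d×d complex matrix X, X = (d+1)·Ψ₀(X) − d·Ψ₁(X); equivalently, X = (2d+1)·[ ((d+1)/(2d+1))·Ψ₀(X) − (d/(2d+1))·Ψ₁(X) ], i.e., the identity map equals (2d+1) times the expectation of (−1)^z Ψ_z when z ∈ {0,1} is Bernoulli with P(z = 1) = d/(2d+1). -/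
open Matrix
open scoped Kronecker

/-- The measure-and-prepare channel `Ψ₀` built from the random unitary
`{(p_a, U_a)}`: randomized basis measurement followed by repreparation. -/
noncomputable def Psi0 (d m : ℕ) (U : Fin m → Matrix (Fin d) (Fin d) ℂ)
    (p : Fin m → ℝ) (X : Matrix (Fin d) (Fin d) ℂ) : Matrix (Fin d) (Fin d) ℂ :=
  ∑ a, (p a : ℂ) • ∑ j, (((U a)ᴴ * X * U a) j j) • rotatedProj d (U a) j

/-- The completely depolarizing channel `Ψ₁(X) = Tr(X)·I/d`. -/
noncomputable def Psi1 (d : ℕ) (X : Matrix (Fin d) (Fin d) ℂ) :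
    Matrix (Fin d) (Fin d) ℂ :=
  (X.trace / d) • (1 : Matrix (Fin d) (Fin d) ℂ)

theorem stmt_2 (d m : ℕ) (hd : 1 ≤ d)
    (U : Fin m → Matrix (Fin d) (Fin d) ℂ)
    (hU : ∀ a, U a ∈ Matrix.unitaryGroup (Fin d) ℂ)
    (p : Fin m → ℝ) (hp : ∀ a, 0 ≤ p a) (hpsum : ∑ a, p a = 1)
    (hdesign : ∀ j : Fin d,
      ∑ a, (p a : ℂ) • (rotatedProj d (U a) j ⊗ₖ rotatedProj d (U a) j)
        = (1 / (d * (d + 1)) : ℂ) •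
            ((1 : Matrix (Fin d) (Fin d) ℂ) ⊗ₖ (1 : Matrix (Fin d) (Fin d) ℂ)
              + swapMatrix d))
    (X : Matrix (Fin d) (Fin d) ℂ) :
    X = ((d : ℂ) + 1) • Psi0 d m U p X - (d : ℂ) • Psi1 d X
      ∧ X = (2 * (d : ℂ) + 1) •
          ((((d : ℂ) + 1) / (2 * (d : ℂ) + 1)) • Psi0 d m U p X
            - ((d : ℂ) / (2 * (d : ℂ) + 1)) • Psi1 d X) := by
  have hd0 : (d : ℂ) ≠ 0 := Nat.cast_ne_zero.mpr (by omega)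
  have hd1 : (d : ℂ) + 1 ≠ 0 := by
    have : ((d + 1 : ℕ) : ℂ) ≠ 0 := Nat.cast_ne_zero.mpr d.succ_ne_zero
    push_cast at this; exact this
  have h2d1 : 2 * (d : ℂ) + 1 ≠ 0 := by
    have : ((2 * d + 1 : ℕ) : ℂ) ≠ 0 := Nat.cast_ne_zero.mpr (by omega)
    push_cast at this; exact this
  have hX : ∀ a j, ((U a)ᴴ * X * (U a)) j j
      = ∑ r, ∑ s, X r s * rotatedProj d (U a) j s r := by
    intro a j
    have hP : ∀ k l, rotatedProj d (U a) j k l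
        = U a k j * (starRingEnd ℂ) (U a l j) := by
      intro k l
      simp [rotatedProj, mul_apply, single, conjTranspose_apply, ite_and,
        Finset.sum_ite_eq, Finset.mul_sum, Finset.sum_ite_eq']
    simp only [mul_apply, conjTranspose_apply, hP, Finset.sum_mul, Finset.mul_sum]
    rw [Finset.sum_comm]
    exact Finset.sum_congr rfl fun r _ => Finset.sum_congr rfl fun s _ => by
      simp only [starRingEnd_apply]; ring
  have key : ∀ k l, Psi0 d m U p X k l
      = ((d : ℂ) + 1)⁻¹ * (X.trace * (if k = l then 1 else 0) + X k l) := by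
    intro k l
    have hentry : ∀ (j r s : Fin d),
        (∑ a, (p a : ℂ) * (rotatedProj d (U a) j k l * rotatedProj d (U a) j s r))
          = ((d : ℂ) + 1)⁻¹ * (d : ℂ)⁻¹ *
              ((if k = l ∧ s = r then (1 : ℂ) else 0)
                + if k = r ∧ s = l then 1 else 0) := by
      intro j r s
      have := congrFun (congrFun (hdesign j) (k, s)) (l, r)
      simpa [Matrix.sum_apply, kroneckerMap_apply, smul_eq_mul, one_apply,
        swapMatrix, Matrix.add_apply] using this
    have expand : Psi0 d m U p X k l
        = ∑ j, ∑ r, ∑ s, X r s *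
            ∑ a, (p a : ℂ) * (rotatedProj d (U a) j k l * rotatedProj d (U a) j s r) := by
      simp only [Psi0, Matrix.sum_apply, Matrix.smul_apply, smul_eq_mul, hX,
        Finset.mul_sum, Finset.sum_mul]
      rw [Finset.sum_comm]
      refine Finset.sum_congr rfl fun j _ => ?_
      rw [Finset.sum_comm]
      refine Finset.sum_congr rfl fun r _ => ?_
      rw [Finset.sum_comm]
      refine Finset.sum_congr rfl fun s _ => Finset.sum_congr rfl fun a _ => by ring
    rw [expand]
    simp only [hentry]
    have inner : ∀ j : Fin d, (∑ r, ∑ s, X r s *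
        (((d : ℂ) + 1)⁻¹ * (d : ℂ)⁻¹ *
          ((if k = l ∧ s = r then (1 : ℂ) else 0) + if k = r ∧ s = l then 1 else 0)))
        = ((d : ℂ) + 1)⁻¹ * (d : ℂ)⁻¹ *
            (X.trace * (if k = l then 1 else 0) + X k l) := by
      intro j
      simp only [mul_add, Finset.sum_add_distrib, mul_ite, mul_one, mul_zero,
        ite_and, trace, diag]
      rw [Finset.sum_comm]
      congr 1
      · by_cases hkl : k = l <;>
          simp [hkl, Finset.sum_ite_eq', Finset.mul_sum, Finset.sum_mul, mul_comm]
      · simp [Finset.sum_ite_eq', Finset.sum_ite_eq, mul_comm]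
    rw [Finset.sum_congr rfl fun j _ => inner j, Finset.sum_const, Finset.card_univ,
      Fintype.card_fin, nsmul_eq_mul]
    field_simp
  have h1 : X = ((d : ℂ) + 1) • Psi0 d m U p X - (d : ℂ) • Psi1 d X := by
    ext k l
    simp only [Matrix.sub_apply, Matrix.smul_apply, key, Psi1, smul_eq_mul, one_apply]
    by_cases hkl : k = l <;> field_simp [hkl] <;> ring
  refine ⟨h1, ?_⟩
  have hs1 : (2 * (d : ℂ) + 1) * (((d : ℂ) + 1) / (2 * (d : ℂ) + 1)) = (d : ℂ) + 1 := by
    field_simp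
  have hs2 : (2 * (d : ℂ) + 1) * ((d : ℂ) / (2 * (d : ℂ) + 1)) = (d : ℂ) := by
    field_simp
  rw [smul_sub, smul_smul, smul_smul, hs1, hs2]
  exact h1
end

section
/- Let X be a finite set, let q be a probability mass function on X, let M be a positive integer, and let f : X → ℤ satisfy 0 ≤ f(x) ≤ M for every x ∈ X. Let μ := Σ_{x ∈ X} q(x) f(x) denote the mean of f under q. Then Pr_{x ∼ q}[ f(x) ≥ μ ] ≥ (μ − ⌈μ⌉ + 1) / (M − ⌈μ⌉ + 1). In particular, if μ is a positive integer then Pr_{x ∼ q}[ f(x) ≥ μ ] ≥ 1/M. -/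
theorem stmt_8 {X : Type*} [Fintype X]
    (q : X → ℝ) (hq0 : ∀ x, 0 ≤ q x) (hq1 : ∑ x, q x = 1)
    (M : ℕ) (hM : 0 < M)
    (f : X → ℤ) (hf : ∀ x, 0 ≤ f x ∧ f x ≤ (M : ℤ))
    (μ : ℝ) (hμ : μ = ∑ x, q x * (f x : ℝ)) :
    ((μ - (⌈μ⌉ : ℝ) + 1) / ((M : ℝ) - (⌈μ⌉ : ℝ) + 1)
        ≤ ∑ x ∈ Finset.univ.filter (fun x => μ ≤ (f x : ℝ)), q x)
      ∧ (∀ m : ℤ, 0 < m → μ = (m : ℝ) →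
          1 / (M : ℝ) ≤ ∑ x ∈ Finset.univ.filter (fun x => μ ≤ (f x : ℝ)), q x) := by
  set S := Finset.univ.filter (fun x => μ ≤ (f x : ℝ)) with hS
  set p := ∑ x ∈ S, q x with hp
  have hp0 : 0 ≤ p := Finset.sum_nonneg (fun x _ => hq0 x)
  have hsplit : p + ∑ x ∈ Finset.univ.filter (fun x => ¬ μ ≤ (f x : ℝ)), q x = 1 := by
    rw [hp, hS, Finset.sum_filter_add_sum_filter_not, hq1]
  have hcomp : ∑ x ∈ Finset.univ.filter (fun x => ¬ μ ≤ (f x : ℝ)), q x = 1 - p := by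
    linarith
  have hμM : μ ≤ (M : ℝ) := by
    rw [hμ]
    calc ∑ x, q x * (f x : ℝ) ≤ ∑ x, q x * (M : ℝ) := by
          apply Finset.sum_le_sum
          intro x _
          exact mul_le_mul_of_nonneg_left (by exact_mod_cast (hf x).2) (hq0 x)
      _ = (M : ℝ) := by rw [← Finset.sum_mul, hq1, one_mul]
  have hceil : (⌈μ⌉ : ℝ) ≤ (M : ℝ) := by
    exact_mod_cast Int.ceil_le.mpr (by exact_mod_cast hμM)
  have hDpos : (0:ℝ) < (M : ℝ) - (⌈μ⌉ : ℝ) + 1 := by linarith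
  -- main inequality
  have hkey : μ ≤ (M : ℝ) * p + ((⌈μ⌉ : ℝ) - 1) * (1 - p) := by
    have hsplit2 : (∑ x ∈ Finset.univ.filter (fun x => μ ≤ (f x : ℝ)), q x * (f x : ℝ))
        + ∑ x ∈ Finset.univ.filter (fun x => ¬ μ ≤ (f x : ℝ)), q x * (f x : ℝ)
        = ∑ x, q x * (f x : ℝ) :=
      Finset.sum_filter_add_sum_filter_not Finset.univ _ _
    have hsum : μ = (∑ x ∈ S, q x * (f x : ℝ))
        + ∑ x ∈ Finset.univ.filter (fun x => ¬ μ ≤ (f x : ℝ)), q x * (f x : ℝ) :=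
      hμ.trans hsplit2.symm
    have h1 : (∑ x ∈ S, q x * (f x : ℝ)) ≤ ∑ x ∈ S, q x * (M : ℝ) := by
      apply Finset.sum_le_sum
      intro x _
      exact mul_le_mul_of_nonneg_left (by exact_mod_cast (hf x).2) (hq0 x)
    have h2 : (∑ x ∈ Finset.univ.filter (fun x => ¬ μ ≤ (f x : ℝ)), q x * (f x : ℝ))
        ≤ ∑ x ∈ Finset.univ.filter (fun x => ¬ μ ≤ (f x : ℝ)), q x * ((⌈μ⌉ : ℝ) - 1) := by
      apply Finset.sum_le_sum
      intro x hx
      have hx' : (f x : ℝ) < μ := by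
        simp only [Finset.mem_filter] at hx
        exact lt_of_not_ge hx.2
      have : f x < ⌈μ⌉ := by
        have := lt_of_lt_of_le hx' (Int.le_ceil μ)
        exact_mod_cast this
      have hfb : (f x : ℝ) ≤ (⌈μ⌉ : ℝ) - 1 := by
        have : f x ≤ ⌈μ⌉ - 1 := by omega
        push_cast
        exact_mod_cast this
      exact mul_le_mul_of_nonneg_left hfb (hq0 x)
    have e1 : ∑ x ∈ S, q x * (M : ℝ) = (M : ℝ) * p := by
      rw [← Finset.sum_mul, hp, mul_comm]
    have e2 : ∑ x ∈ Finset.univ.filter (fun x => ¬ μ ≤ (f x : ℝ)), q x * ((⌈μ⌉ : ℝ) - 1)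
        = ((⌈μ⌉ : ℝ) - 1) * (1 - p) := by
      rw [← Finset.sum_mul, hcomp, mul_comm]
    linarith [hsum]
  have hmain : (μ - (⌈μ⌉ : ℝ) + 1) / ((M : ℝ) - (⌈μ⌉ : ℝ) + 1) ≤ p := by
    rw [div_le_iff₀ hDpos]
    nlinarith
  refine ⟨hmain, ?_⟩
  intro m hm hμm
  have hc : (⌈μ⌉ : ℝ) = (m : ℝ) := by
    rw [hμm, Int.ceil_intCast]
  have hmM : (m : ℝ) ≤ (M : ℝ) := by rw [← hμm]; exact hμM
  have h1 : (1:ℝ) / (M : ℝ) ≤ 1 / ((M : ℝ) - (m : ℝ) + 1) := by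
    apply one_div_le_one_div_of_le
    · linarith
    · have : (1:ℝ) ≤ (m : ℝ) := by exact_mod_cast hm
      linarith
  calc (1:ℝ) / (M : ℝ) ≤ 1 / ((M : ℝ) - (m : ℝ) + 1) := h1
    _ = (μ - (⌈μ⌉ : ℝ) + 1) / ((M : ℝ) - (⌈μ⌉ : ℝ) + 1) := by rw [hc, hμm]; ring_nf
    _ ≤ p := hmain
end

section
/- Let X be a finite set and I a finite index set. Let p be a probability mass function on I, let ε : I → {−1, +1}, let c > 0, and for each i ∈ I let q_i be a probability mass function on X. Suppose that q(x) := c · Σ_{i ∈ I} p(i) ε(i) q_i(x) is itself a probability mass function on X, and define q̃(x) := Σ_{i ∈ I} p(i) q_i(x). Let M be a positive integer and f : X → ℤ with 0 ≤ f(x) ≤ M for all x ∈ X, and suppose the mean μ := Σ_x q(x) f(x) is a positive integer. Then Pr_{x ∼ q̃}[ f(x) ≥ μ ] ≥ 1/(c·M). -/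
theorem stmt_9 {X : Type*} [Fintype X] {I : Type*} [Fintype I]
    (p : I → ℝ) (hp0 : ∀ i, 0 ≤ p i) (hp1 : ∑ i, p i = 1)
    (ε : I → ℝ) (hε : ∀ i, ε i = 1 ∨ ε i = -1)
    (c : ℝ) (hc : 0 < c)
    (q : I → X → ℝ) (hq0 : ∀ i x, 0 ≤ q i x) (hq1 : ∀ i, ∑ x, q i x = 1)
    (hmix0 : ∀ x, 0 ≤ c * ∑ i, p i * ε i * q i x)
    (hmix1 : ∑ x, c * ∑ i, p i * ε i * q i x = 1)
    (M : ℕ) (hM : 0 < M)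
    (f : X → ℤ) (hf : ∀ x, 0 ≤ f x ∧ f x ≤ (M : ℤ))
    (μ : ℤ) (hμpos : 0 < μ)
    (hμ : (μ : ℝ) = ∑ x, (c * ∑ i, p i * ε i * q i x) * (f x : ℝ)) :
    1 / (c * M)
      ≤ ∑ x ∈ Finset.univ.filter (fun x => μ ≤ f x), ∑ i, p i * q i x := by
  classical
  set Q : X → ℝ := fun x => c * ∑ i, p i * ε i * q i x with hQdef
  have hQ0 : ∀ x, 0 ≤ Q x := hmix0
  set S : Finset X := Finset.univ.filter (fun x => μ ≤ f x) with hSdef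
  have hMpos : (0:ℝ) < M := by exact_mod_cast hM
  -- Q ≤ c * q̃
  have hQle : ∀ x, Q x ≤ c * ∑ i, p i * q i x := by
    intro x
    apply mul_le_mul_of_nonneg_left _ hc.le
    apply Finset.sum_le_sum
    intro i _
    have hε1 : ε i ≤ 1 := by rcases hε i with h | h <;> simp [h]
    nlinarith [mul_nonneg (mul_nonneg (hp0 i) (hq0 i x)) (sub_nonneg.mpr hε1)]
  -- tail bound for Q
  have h3 : ∑ x ∈ Sᶜ, Q x ≤ 1 := by
    calc ∑ x ∈ Sᶜ, Q x ≤ ∑ x, Q x := by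
          apply Finset.sum_le_sum_of_subset_of_nonneg (Finset.subset_univ _)
          intro x _ _; exact hQ0 x
      _ = 1 := hmix1
  have hsplit : (μ:ℝ) = ∑ x ∈ S, Q x * f x + ∑ x ∈ Sᶜ, Q x * f x := by
    rw [hμ, ← Finset.sum_add_sum_compl S]
  have h1 : ∑ x ∈ S, Q x * f x ≤ (M:ℝ) * ∑ x ∈ S, Q x := by
    rw [Finset.mul_sum]
    apply Finset.sum_le_sum
    intro x _
    have hfM : (f x : ℝ) ≤ M := by exact_mod_cast (hf x).2
    nlinarith [mul_le_mul_of_nonneg_left hfM (hQ0 x)]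
  have h2 : ∑ x ∈ Sᶜ, Q x * f x ≤ ((μ:ℝ) - 1) * ∑ x ∈ Sᶜ, Q x := by
    rw [Finset.mul_sum]
    apply Finset.sum_le_sum
    intro x hx
    have hxS : ¬ (μ ≤ f x) := by
      simpa [hSdef] using Finset.mem_compl.mp hx
    have hfx : f x ≤ μ - 1 := by omega
    have hfx' : (f x : ℝ) ≤ (μ:ℝ) - 1 := by exact_mod_cast hfx
    nlinarith [mul_le_mul_of_nonneg_left hfx' (hQ0 x)]
  have hμ1 : (1:ℝ) ≤ (μ:ℝ) := by exact_mod_cast hμpos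
  have hcomplnn : 0 ≤ ∑ x ∈ Sᶜ, Q x := Finset.sum_nonneg (fun x _ => hQ0 x)
  have hTQ : 1 / (M:ℝ) ≤ ∑ x ∈ S, Q x := by
    have hcompl : ((μ:ℝ) - 1) * ∑ x ∈ Sᶜ, Q x ≤ (μ:ℝ) - 1 := by
      nlinarith
    rw [div_le_iff₀ hMpos]
    linarith
  -- transfer to q̃
  have hfinal : ∑ x ∈ S, Q x ≤ c * ∑ x ∈ S, ∑ i, p i * q i x := by
    rw [Finset.mul_sum]
    exact Finset.sum_le_sum (fun x _ => hQle x)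
  rw [div_le_iff₀ (by positivity)]
  calc (1:ℝ) = (1 / (M:ℝ)) * M := by field_simp
    _ ≤ (∑ x ∈ S, Q x) * M := by nlinarith
    _ ≤ (c * ∑ x ∈ S, ∑ i, p i * q i x) * M := by nlinarith
    _ = (∑ x ∈ S, ∑ i, p i * q i x) * (c * M) := by ring
end
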